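/- arXiv:1507.03523 — 2 statements merged into one kernel-verified Lean document; each statement's English description precedes it below -/
import Mathlib

section
/- The image φ(A) ⊆ B is closed under the Wick–Voros star product: for all f, g ∈ A there exists h ∈ A with φ(f) ⋆_WV φ(g) = φ(h). That is, the subalgebra of B generated by the elements Σ_{i=1}^d w^i z^i and w^1,…,w^d is a noncommutative subalgebra of (B, ⋆_WV). -/
/-!
Write `s = Σᵢ wⁱ zⁱ = φ(x⁰)`. Because `φ(f)` depends on the `z`'s only through `s`, the chain
rule gives `∂_{z^a} φ(f) = w^a · φ(∂₀ f)`. On the side of the star product, `z^a` and `w^k` pass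
through `F ⋆_WV (z^a G)` and `(w^k F) ⋆_WV G`, while
`F ⋆_WV (w^k G) = w^k (F ⋆_WV G) + θ (∂_{z^k} F) ⋆_WV G`.
Combining these, every generator `x^μ` satisfies
`φ(f) ⋆_WV (φ(x^μ) G) = φ(x^μ) (φ(f) ⋆_WV G + θ φ(∂₀ f) ⋆_WV G)`,
and induction on `g` (for all `f` at once) produces `h`.
-/

open MvPolynomial

/-- Iterated partial derivative along a list of variable indices. -/
noncomputable def pdList {σ : Type*} [DecidableEq σ] (l : List σ)
    (f : MvPolynomial σ ℝ) : MvPolynomial σ ℝ :=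
  l.foldr (fun i h => pderiv i h) f

/-- The Wick–Voros star product on `B = ℝ[z^1,…,z^d,w^1,…,w^d]`
(`Sum.inl i` indexing `z^i`, `Sum.inr i` indexing `w^i`):
`f ⋆_WV g = Σ_{n≥0} (θⁿ/n!) Σ_{i_1,…,i_n} (∂_{z^{i_1}}⋯∂_{z^{i_n}} f)·(∂_{w^{i_1}}⋯∂_{w^{i_n}} g)`;
on polynomials only finitely many terms are nonzero, so the sum is a `finsum`. -/
noncomputable def wvstar (d : ℕ) (θ : ℝ)
    (f g : MvPolynomial (Fin d ⊕ Fin d) ℝ) : MvPolynomial (Fin d ⊕ Fin d) ℝ :=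
  ∑ᶠ n : ℕ, (θ ^ n / (n.factorial : ℝ)) •
    ∑ i : Fin n → Fin d,
      pdList (List.ofFn fun j => Sum.inl (i j)) f *
      pdList (List.ofFn fun j => Sum.inr (i j)) g

/-- The algebra homomorphism `φ : ℝ[x⁰,…,x^d] → ℝ[z^1,…,z^d,w^1,…,w^d]` with
`φ(x⁰) = Σ_i w^i z^i` and `φ(x^k) = w^k` for `k = 1,…,d`. -/
noncomputable def phiR (d : ℕ) :
    MvPolynomial (Fin (d + 1)) ℝ →ₐ[ℝ] MvPolynomial (Fin d ⊕ Fin d) ℝ :=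
  aeval (Fin.cases (∑ i : Fin d, X (Sum.inr i) * X (Sum.inl i))
    (fun k : Fin d => X (Sum.inr k)))

namespace MvPolynomial

theorem pderiv_pderiv_comm {R σ : Type*} [CommRing R] (i j : σ) (f : MvPolynomial σ R) :
    pderiv i (pderiv j f) = pderiv j (pderiv i f) := by
  classical
  have h : ⁅pderiv i, pderiv j⁆ = (0 : Derivation R (MvPolynomial σ R) (MvPolynomial σ R)) :=
    derivation_ext fun k => by
      rw [Derivation.commutator_apply, pderiv_X, pderiv_X, Pi.single_apply, Pi.single_apply]
      split_ifs <;> simp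
  rw [← sub_eq_zero, ← Derivation.commutator_apply, h, Derivation.zero_apply]

theorem totalDegree_pderiv_le {R σ : Type*} [CommSemiring R] (i : σ) (f : MvPolynomial σ R) :
    (pderiv i f).totalDegree ≤ f.totalDegree - 1 := by
  classical
  refine Finset.sup_le fun m hm => ?_
  have hm' : m + Finsupp.single i 1 ∈ f.support := by
    rw [mem_support_iff, coeff_pderiv] at hm
    exact mem_support_iff.2 (left_ne_zero_of_mul hm)
  have := le_totalDegree hm'
  rw [Finsupp.sum_add_index' (fun _ => rfl) (fun _ _ _ => rfl),
    Finsupp.sum_single_index rfl] at this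
  omega

theorem totalDegree_X_mul_le {R σ : Type*} [CommSemiring R] [Nontrivial R] (s : σ)
    (g : MvPolynomial σ R) : (X s * g).totalDegree ≤ g.totalDegree + 1 := by
  rw [add_comm]
  exact (totalDegree_mul _ _).trans_eq (by rw [totalDegree_X])

end MvPolynomial

theorem pow_succ_div_factorial_mul (θ : ℝ) (m : ℕ) :
    θ ^ (m + 1) / (m + 1).factorial * (m + 1) = θ * (θ ^ m / m.factorial) := by
  have := m.factorial_pos
  rw [Nat.factorial_succ, pow_succ]
  push_cast
  field_simp

section pdList

variable {σ : Type*} [DecidableEq σ]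

theorem pdList_cons (a : σ) (l : List σ) (f : MvPolynomial σ ℝ) :
    pdList (a :: l) f = pderiv a (pdList l f) :=
  rfl

theorem pdList_append (l₁ l₂ : List σ) (f : MvPolynomial σ ℝ) :
    pdList (l₁ ++ l₂) f = pdList l₁ (pdList l₂ f) :=
  List.foldr_append

theorem pdList_zero (l : List σ) : pdList l (0 : MvPolynomial σ ℝ) = 0 := by
  induction l with
  | nil => rfl
  | cons a l ih => rw [pdList_cons, ih, map_zero]

theorem pdList_add (l : List σ) (f g : MvPolynomial σ ℝ) :
    pdList l (f + g) = pdList l f + pdList l g := by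
  induction l with
  | nil => rfl
  | cons a l ih => rw [pdList_cons, pdList_cons, pdList_cons, ih, map_add]

theorem pdList_X_mul {a : σ} {l : List σ} (ha : a ∉ l) (f : MvPolynomial σ ℝ) :
    pdList l (X a * f) = X a * pdList l f := by
  induction l with
  | nil => rfl
  | cons b l ih =>
    rw [List.mem_cons, not_or] at ha
    rw [pdList_cons, pdList_cons, ih ha.2, pderiv_mul, pderiv_X_of_ne ha.1, zero_mul, zero_add]

theorem totalDegree_pdList_le (l : List σ) (f : MvPolynomial σ ℝ) :
    (pdList l f).totalDegree ≤ f.totalDegree - l.length := by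
  induction l with
  | nil => exact le_rfl
  | cons a l ih =>
    have := totalDegree_pderiv_le a (pdList l f)
    rw [pdList_cons, List.length_cons]
    omega

theorem pdList_eq_zero_of_totalDegree_lt {l : List σ} {f : MvPolynomial σ ℝ}
    (h : f.totalDegree < l.length) : pdList l f = 0 := by
  obtain _ | ⟨a, l⟩ := l
  · simp at h
  · have hconst : (pdList l f).totalDegree = 0 := by
      have := totalDegree_pdList_le l f
      simp only [List.length_cons] at h
      omega
    rw [pdList_cons, totalDegree_eq_zero_iff_eq_C.1 hconst, pderiv_C]

end pdList

section wvstarTerm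

variable {ι : Type*} [Fintype ι] [DecidableEq ι]

noncomputable def wvstarTerm (n : ℕ) (f g : MvPolynomial (ι ⊕ ι) ℝ) :
    MvPolynomial (ι ⊕ ι) ℝ :=
  ∑ i : Fin n → ι,
    pdList (List.ofFn fun j => Sum.inl (i j)) f * pdList (List.ofFn fun j => Sum.inr (i j)) g

theorem wvstarTerm_zero (f g : MvPolynomial (ι ⊕ ι) ℝ) : wvstarTerm 0 f g = f * g := by
  simp [wvstarTerm, pdList]

theorem wvstarTerm_succ (n : ℕ) (f g : MvPolynomial (ι ⊕ ι) ℝ) :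
    wvstarTerm (n + 1) f g
      = ∑ a : ι, wvstarTerm n (pderiv (Sum.inl a) f) (pderiv (Sum.inr a) g) := by
  rw [wvstarTerm, ← (Fin.snocEquiv fun _ => ι).sum_comp, Fintype.sum_prod_type]
  refine Finset.sum_congr rfl fun a _ => Finset.sum_congr rfl fun i _ => ?_
  simp only [Fin.snocEquiv_apply, List.ofFn_succ', Fin.snoc_castSucc, Fin.snoc_last,
    List.concat_eq_append, pdList_append]
  rfl

theorem wvstarTerm_zero_right (n : ℕ) (f : MvPolynomial (ι ⊕ ι) ℝ) : wvstarTerm n f 0 = 0 :=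
  Finset.sum_eq_zero fun i _ => by rw [pdList_zero, mul_zero]

theorem wvstarTerm_add_right (n : ℕ) (f g₁ g₂ : MvPolynomial (ι ⊕ ι) ℝ) :
    wvstarTerm n f (g₁ + g₂) = wvstarTerm n f g₁ + wvstarTerm n f g₂ := by
  simp only [wvstarTerm, pdList_add, mul_add, Finset.sum_add_distrib]

theorem wvstarTerm_X_inl_mul_right (n : ℕ) (a : ι) (f g : MvPolynomial (ι ⊕ ι) ℝ) :
    wvstarTerm n f (X (Sum.inl a) * g) = X (Sum.inl a) * wvstarTerm n f g := by
  rw [wvstarTerm, wvstarTerm, Finset.mul_sum]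
  refine Finset.sum_congr rfl fun i _ => ?_
  rw [pdList_X_mul (by simp [List.mem_ofFn]), mul_left_comm]

theorem wvstarTerm_X_inr_mul_left (n : ℕ) (k : ι) (f g : MvPolynomial (ι ⊕ ι) ℝ) :
    wvstarTerm n (X (Sum.inr k) * f) g = X (Sum.inr k) * wvstarTerm n f g := by
  rw [wvstarTerm, wvstarTerm, Finset.mul_sum]
  refine Finset.sum_congr rfl fun i _ => ?_
  rw [pdList_X_mul (by simp [List.mem_ofFn]), mul_assoc]

theorem wvstarTerm_eq_zero_of_totalDegree_lt {n : ℕ} (f : MvPolynomial (ι ⊕ ι) ℝ)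
    {g : MvPolynomial (ι ⊕ ι) ℝ} (h : g.totalDegree < n) : wvstarTerm n f g = 0 :=
  Finset.sum_eq_zero fun i _ => by
    rw [pdList_eq_zero_of_totalDegree_lt (f := g) (by simpa using h), mul_zero]

theorem wvstarTerm_succ_X_inr_mul_right (n : ℕ) (k : ι) (f g : MvPolynomial (ι ⊕ ι) ℝ) :
    wvstarTerm (n + 1) f (X (Sum.inr k) * g)
      = wvstarTerm n (pderiv (Sum.inl k) f) g
        + ∑ a : ι,
            wvstarTerm n (pderiv (Sum.inl a) f) (X (Sum.inr k) * pderiv (Sum.inr a) g) := by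
  simp only [wvstarTerm_succ, pderiv_mul, wvstarTerm_add_right, Finset.sum_add_distrib]
  congr 1
  rw [Finset.sum_eq_single k]
  · rw [pderiv_X_self, one_mul]
  · intro a _ hak
    rw [pderiv_X_of_ne (by simpa using Ne.symm hak), zero_mul, wvstarTerm_zero_right]
  · simp

theorem wvstarTerm_X_inr_mul_right (n : ℕ) (k : ι) (f g : MvPolynomial (ι ⊕ ι) ℝ) :
    wvstarTerm (n + 1) f (X (Sum.inr k) * g)
      = X (Sum.inr k) * wvstarTerm (n + 1) f g
        + (n + 1) • wvstarTerm n (pderiv (Sum.inl k) f) g := by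
  induction n generalizing f g with
  | zero =>
    rw [wvstarTerm_succ_X_inr_mul_right, wvstarTerm_succ, Finset.mul_sum, zero_add, one_smul,
      add_comm]
    congr 1
    refine Finset.sum_congr rfl fun a _ => ?_
    rw [wvstarTerm_zero, wvstarTerm_zero, mul_left_comm]
  | succ n ih =>
    have hsum : ∑ a : ι, wvstarTerm (n + 1) (pderiv (Sum.inl a) f)
          (X (Sum.inr k) * pderiv (Sum.inr a) g)
        = X (Sum.inr k) * wvstarTerm (n + 2) f g
          + (n + 1) • wvstarTerm (n + 1) (pderiv (Sum.inl k) f) g := by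
      simp only [ih, Finset.sum_add_distrib, ← Finset.mul_sum, ← Finset.smul_sum,
        pderiv_pderiv_comm (Sum.inl k) (Sum.inl _), ← wvstarTerm_succ]
    rw [wvstarTerm_succ_X_inr_mul_right, hsum, succ_nsmul _ (n + 1)]
    abel

end wvstarTerm

section wvstar

variable {d : ℕ} (θ : ℝ)

theorem wvstar_eq_finsum (f g : MvPolynomial (Fin d ⊕ Fin d) ℝ) :
    wvstar d θ f g = ∑ᶠ n : ℕ, (θ ^ n / n.factorial) • wvstarTerm n f g :=
  rfl

theorem wvstar_eq_sum_range (f : MvPolynomial (Fin d ⊕ Fin d) ℝ)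
    {g : MvPolynomial (Fin d ⊕ Fin d) ℝ} {N : ℕ} (h : g.totalDegree < N) :
    wvstar d θ f g = ∑ n ∈ Finset.range N, (θ ^ n / n.factorial) • wvstarTerm n f g := by
  rw [wvstar_eq_finsum]
  refine finsum_eq_finsetSum_of_support_subset _ fun n hn => ?_
  rw [Finset.coe_range, Set.mem_Iio]
  by_contra! hNn
  exact hn (show _ • _ = 0 by
    rw [wvstarTerm_eq_zero_of_totalDegree_lt f (h.trans_le hNn), smul_zero])

theorem wvstar_add_right (f g₁ g₂ : MvPolynomial (Fin d ⊕ Fin d) ℝ) :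
    wvstar d θ f (g₁ + g₂) = wvstar d θ f g₁ + wvstar d θ f g₂ := by
  set N := max g₁.totalDegree g₂.totalDegree + 1
  have h₁ : g₁.totalDegree < N := by omega
  have h₂ : g₂.totalDegree < N := by omega
  have h₁₂ : (g₁ + g₂).totalDegree < N := (totalDegree_add g₁ g₂).trans_lt (by omega)
  rw [wvstar_eq_sum_range θ f h₁, wvstar_eq_sum_range θ f h₂, wvstar_eq_sum_range θ f h₁₂,
    ← Finset.sum_add_distrib]
  simp only [wvstarTerm_add_right, smul_add]

theorem wvstar_sum_right {α : Type*} (s : Finset α) (f : MvPolynomial (Fin d ⊕ Fin d) ℝ)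
    (g : α → MvPolynomial (Fin d ⊕ Fin d) ℝ) :
    wvstar d θ f (∑ a ∈ s, g a) = ∑ a ∈ s, wvstar d θ f (g a) :=
  map_sum (AddMonoidHom.mk' (wvstar d θ f) (wvstar_add_right θ f)) g s

theorem wvstar_C_right (f : MvPolynomial (Fin d ⊕ Fin d) ℝ) (c : ℝ) :
    wvstar d θ f (C c) = f * C c := by
  rw [wvstar_eq_sum_range θ f (N := 1) (by simp), Finset.sum_range_one, wvstarTerm_zero]
  simp

theorem wvstar_X_inr_mul_left (k : Fin d) (f g : MvPolynomial (Fin d ⊕ Fin d) ℝ) :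
    wvstar d θ (X (Sum.inr k) * f) g = X (Sum.inr k) * wvstar d θ f g := by
  have hg := g.totalDegree.lt_succ_self
  simp only [wvstar_eq_sum_range θ _ hg, wvstarTerm_X_inr_mul_left, Finset.mul_sum, mul_smul_comm]

theorem wvstar_X_inl_mul_right (a : Fin d) (f g : MvPolynomial (Fin d ⊕ Fin d) ℝ) :
    wvstar d θ f (X (Sum.inl a) * g) = X (Sum.inl a) * wvstar d θ f g := by
  have hg : g.totalDegree < g.totalDegree + 2 := by omega
  have hXg := (totalDegree_X_mul_le (Sum.inl a) g).trans_lt (Nat.lt_succ_self _)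
  simp only [wvstar_eq_sum_range θ _ hg, wvstar_eq_sum_range θ _ hXg, wvstarTerm_X_inl_mul_right,
    Finset.mul_sum, mul_smul_comm]

theorem wvstar_X_inr_mul_right (k : Fin d) (f g : MvPolynomial (Fin d ⊕ Fin d) ℝ) :
    wvstar d θ f (X (Sum.inr k) * g)
      = X (Sum.inr k) * wvstar d θ f g + θ • wvstar d θ (pderiv (Sum.inl k) f) g := by
  have hterm (n : ℕ) :
      (θ ^ (n + 1) / (n + 1).factorial) • wvstarTerm (n + 1) f (X (Sum.inr k) * g)
        = X (Sum.inr k) * ((θ ^ (n + 1) / (n + 1).factorial) • wvstarTerm (n + 1) f g)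
          + θ • ((θ ^ n / n.factorial) • wvstarTerm n (pderiv (Sum.inl k) f) g) := by
    rw [wvstarTerm_X_inr_mul_right, smul_add, mul_smul_comm, ← Nat.cast_smul_eq_nsmul ℝ,
      smul_smul, smul_smul, Nat.cast_succ, pow_succ_div_factorial_mul]
  have hg := g.totalDegree.lt_succ_self
  have hg' := hg.trans g.totalDegree.succ.lt_succ_self
  have hXg := (totalDegree_X_mul_le (Sum.inr k) g).trans_lt g.totalDegree.succ.lt_succ_self
  rw [wvstar_eq_sum_range θ _ hXg, wvstar_eq_sum_range θ _ hg', wvstar_eq_sum_range θ _ hg,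
    Finset.sum_range_succ' (fun n => _ • wvstarTerm n f (X (Sum.inr k) * g)),
    Finset.sum_range_succ' (fun n => _ • wvstarTerm n f g)]
  simp only [hterm, Finset.sum_add_distrib, wvstarTerm_zero, mul_add, Finset.mul_sum,
    Finset.smul_sum, mul_smul_comm, mul_left_comm f]
  abel

end wvstar

section phiR

variable {d : ℕ}

theorem phiR_C (c : ℝ) : phiR d (C c) = C c :=
  aeval_C _ _

theorem phiR_X_zero : phiR d (X 0) = ∑ i : Fin d, X (Sum.inr i) * X (Sum.inl i) :=
  aeval_X _ _

theorem phiR_X_succ (k : Fin d) : phiR d (X k.succ) = X (Sum.inr k) :=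
  aeval_X _ _

theorem pderiv_inl_phiR (a : Fin d) (f : MvPolynomial (Fin (d + 1)) ℝ) :
    pderiv (Sum.inl a) (phiR d f) = X (Sum.inr a) * phiR d (pderiv 0 f) := by
  induction f using MvPolynomial.induction_on with
  | C c => rw [phiR_C, pderiv_C, pderiv_C, map_zero, mul_zero]
  | add p q hp hq => rw [map_add, map_add, hp, hq, map_add, map_add, mul_add]
  | mul_X p μ hp =>
    have hX : pderiv (Sum.inl a) (phiR d (X μ)) = X (Sum.inr a) * phiR d (pderiv 0 (X μ)) := by
      cases μ using Fin.cases with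
      | zero =>
        rw [phiR_X_zero, map_sum, Finset.sum_eq_single a]
        · simp
        · intro b _ hba
          simp [hba]
        · simp
      | succ k => simp [phiR_X_succ, Fin.succ_ne_zero]
    simp only [map_mul, pderiv_mul, hp, hX, map_add, mul_add]
    ring

theorem wvstar_phiR_X_mul_right (θ : ℝ) (f : MvPolynomial (Fin (d + 1)) ℝ) (μ : Fin (d + 1))
    (g : MvPolynomial (Fin d ⊕ Fin d) ℝ) :
    wvstar d θ (phiR d f) (phiR d (X μ) * g)
      = phiR d (X μ)
          * (wvstar d θ (phiR d f) g + θ • wvstar d θ (phiR d (pderiv 0 f)) g) := by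
  cases μ using Fin.cases with
  | zero =>
    simp only [phiR_X_zero, Finset.sum_mul, wvstar_sum_right, mul_assoc, wvstar_X_inr_mul_right,
      wvstar_X_inl_mul_right, pderiv_inl_phiR, wvstar_X_inr_mul_left, mul_add, mul_smul_comm,
      mul_left_comm (X (Sum.inl _)), Finset.sum_add_distrib, Finset.smul_sum]
  | succ k =>
    rw [phiR_X_succ, wvstar_X_inr_mul_right, pderiv_inl_phiR, wvstar_X_inr_mul_left, mul_add,
      mul_smul_comm]

end phiR

theorem phi_image_closed_under_wvstar_general (d : ℕ) (θ : ℝ)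
    (f g : MvPolynomial (Fin (d + 1)) ℝ) :
    ∃ h : MvPolynomial (Fin (d + 1)) ℝ,
      wvstar d θ (phiR d f) (phiR d g) = phiR d h := by
  induction g using MvPolynomial.induction_on generalizing f with
  | C c => exact ⟨f * C c, by rw [map_mul, phiR_C, wvstar_C_right]⟩
  | add p q hp hq =>
    obtain ⟨h₁, e₁⟩ := hp f
    obtain ⟨h₂, e₂⟩ := hq f
    exact ⟨h₁ + h₂, by rw [map_add, wvstar_add_right, e₁, e₂, map_add]⟩
  | mul_X p μ ih =>
    obtain ⟨h₁, e₁⟩ := ih f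
    obtain ⟨h₂, e₂⟩ := ih (pderiv 0 f)
    refine ⟨X μ * (h₁ + θ • h₂), ?_⟩
    rw [map_mul, mul_comm, wvstar_phiR_X_mul_right, e₁, e₂, map_mul, map_add, map_smul]

/-- the image `φ(A) ⊆ B` is closed under the Wick–Voros star product:
for all `f, g ∈ A` there is `h ∈ A` with `φ(f) ⋆_WV φ(g) = φ(h)`. -/
theorem phi_image_closed_under_wvstar (d : ℕ) (hd : 1 ≤ d) (θ : ℝ)
    (f g : MvPolynomial (Fin (d + 1)) ℝ) :
    ∃ h : MvPolynomial (Fin (d + 1)) ℝ,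
      wvstar d θ (phiR d f) (phiR d g) = phiR d h :=
  phi_image_closed_under_wvstar_general d θ f g
end

section
/- The κ-Minkowski star product ⋆ on the polynomial algebra A is associative: for all f, g, h ∈ A, (f ⋆ g) ⋆ h = f ⋆ (g ⋆ h). -/
open MvPolynomial

/-- The `n`-th order operator `g ↦ Σ_{μ_1,…,μ_n} x^{μ_1}⋯x^{μ_n} ∂_{μ_1}⋯∂_{μ_n} g`. -/
noncomputable def multiEuler (d n : ℕ) (g : MvPolynomial (Fin (d + 1)) ℝ) :
    MvPolynomial (Fin (d + 1)) ℝ :=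
  ∑ μ : Fin n → Fin (d + 1), (∏ j : Fin n, X (μ j)) * pdList (List.ofFn μ) g

/-- The κ-Minkowski star product on `A = ℝ[x⁰,…,x^d]`:
`f ⋆ g = Σ_{n≥0} (θⁿ/n!) (∂₀ⁿ f) · (Σ_{μ_1,…,μ_n} x^{μ_1}⋯x^{μ_n} ∂_{μ_1}⋯∂_{μ_n} g)`;
on polynomials only finitely many terms are nonzero, so the sum is a `finsum`. -/
noncomputable def kstar (d : ℕ) (θ : ℝ)
    (f g : MvPolynomial (Fin (d + 1)) ℝ) : MvPolynomial (Fin (d + 1)) ℝ :=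
  ∑ᶠ n : ℕ, (θ ^ n / (n.factorial : ℝ)) •
    ((fun h => pderiv (0 : Fin (d + 1)) h)^[n] f * multiEuler d n g)
/-!
If `g` is homogeneous of degree `k`, the operator `∑ x^{μ₁}⋯x^{μₙ} ∂_{μ₁}⋯∂_{μₙ}` acts on it as the
falling factorial `k (k-1) ⋯ (k-n+1)` (iterate Euler's identity), so the defining series collapses
to `f ⋆ g = Tᵏ f · g` with `T = 1 + θ ∂₀`. The operator `T` obeys the twisted Leibniz rule
`T (a b) = T a · b + a · θ ∂₀ b`, whence `Tˡ (a b) = ∑ₙ (l choose n) T^(l-n) a · (θ ∂₀)ⁿ b`.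
For `g`, `h` homogeneous of degrees `k`, `l`, both `(f ⋆ g) ⋆ h = Tˡ (Tᵏ f · g) · h` and
`f ⋆ (g ⋆ h) = f ⋆ ∑ₙ (l choose n) (θ ∂₀)ⁿ g · h` therefore expand to
`∑ₙ (l choose n) T^(k+l-n) f · (θ ∂₀)ⁿ g · h`, and biadditivity of `⋆` finishes the proof.
-/

open Finset TensorProduct

-- `S ∘ mul = mul ∘ (1 ⊗ U + S ⊗ 1)` on `A ⊗ A`, where the two summands commute: this is the
-- binomial theorem in `End (A ⊗ A)`.
theorem Module.End.pow_apply_mul_of_apply_mul {R A : Type*} [CommSemiring R] [Semiring A]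
    [Algebra R A] {S U : Module.End R A} (h : ∀ a b, S (a * b) = S a * b + a * U b)
    (l : ℕ) (a b : A) :
    (S ^ l) (a * b) = ∑ n ∈ range (l + 1), l.choose n • ((S ^ (l - n)) a * (U ^ n) b) := by
  have hmul : S ∘ₗ LinearMap.mul' R A = LinearMap.mul' R A ∘ₗ (U.lTensor A + S.rTensor A) :=
    TensorProduct.ext' fun a b => by simp [h, add_comm]
  have hcomm : Commute (U.lTensor A) (S.rTensor A) := by
    simp only [Commute, SemiconjBy, Module.End.mul_eq_comp, LinearMap.lTensor_comp_rTensor,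
      LinearMap.rTensor_comp_lTensor]
  have hpow := congr($(Module.End.commute_pow_left_of_commute hmul l) (a ⊗ₜ b))
  simp only [LinearMap.comp_apply, LinearMap.mul'_apply] at hpow
  rw [hpow, hcomm.add_pow]
  simp only [LinearMap.coe_sum, Finset.sum_apply, map_sum, Module.End.mul_apply,
    Module.End.natCast_apply, LinearMap.lTensor_pow, LinearMap.rTensor_pow, map_nsmul,
    LinearMap.rTensor_tmul, LinearMap.lTensor_tmul, LinearMap.mul'_apply]

namespace MvPolynomial.IsHomogeneous

variable {R σ : Type*} [CommSemiring R] {g : MvPolynomial σ R} {k : ℕ}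

theorem iterate_pderiv (hg : g.IsHomogeneous k) (i : σ) (n : ℕ) :
    ((pderiv i)^[n] g).IsHomogeneous (k - n) := by
  induction n with
  | zero => exact hg
  | succ n ih => rw [Function.iterate_succ_apply', Nat.sub_succ]; exact ih.pderiv

theorem iterate_pderiv_eq_zero {n : ℕ} (hg : g.IsHomogeneous k) (i : σ) (hn : k < n) :
    (pderiv i)^[n] g = 0 := by
  obtain ⟨m, rfl⟩ := Nat.exists_eq_add_of_lt hn
  have hconst := totalDegree_eq_zero_iff_eq_C.mp
    (Nat.le_zero.mp (by simpa using (hg.iterate_pderiv i k).totalDegree_le))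
  rw [add_assoc, add_comm, Function.iterate_add_apply, Function.iterate_succ_apply, hconst,
    pderiv_C, iterate_map_zero]

end MvPolynomial.IsHomogeneous

section pdList

variable {σ : Type*} [DecidableEq σ]

theorem pdList_eq_prod (l : List σ) :
    pdList l = ⇑(l.map fun i => (pderiv i).toLinearMap).prod := by
  induction l with
  | nil => rfl
  | cons i l ih => ext1 f; simp [pdList, ← ih]

theorem pdList_append_singleton (l : List σ) (i : σ) (f : MvPolynomial σ ℝ) :
    pdList (l ++ [i]) f = pdList l (pderiv i f) := by
  simp [pdList, List.foldr_append]

end pdList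

variable {d : ℕ}

theorem multiEuler_eq_coe (n : ℕ) :
    multiEuler d n = ⇑(∑ μ : Fin n → Fin (d + 1), LinearMap.mulLeft ℝ (∏ j, X (μ j)) ∘ₗ
      ((List.ofFn μ).map fun i => (pderiv i).toLinearMap).prod) := by
  ext1 g
  simp [multiEuler, pdList_eq_prod]

theorem multiEuler_succ (n : ℕ) (g : MvPolynomial (Fin (d + 1)) ℝ) :
    multiEuler d (n + 1) g = ∑ i, X i * multiEuler d n (pderiv i g) := by
  rw [multiEuler, ← (Fin.snocEquiv fun _ => Fin (d + 1)).sum_comp, Fintype.sum_prod_type]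
  refine sum_congr rfl fun i _ => ?_
  simp only [multiEuler, mul_sum]
  refine sum_congr rfl fun ν _ => ?_
  have hofFn : List.ofFn (Fin.snoc ν i : Fin (n + 1) → Fin (d + 1)) = List.ofFn ν ++ [i] := by
    rw [List.ofFn_succ']; simp
  simp only [Fin.snocEquiv, Equiv.coe_fn_mk, hofFn, pdList_append_singleton,
    Fin.prod_univ_castSucc, Fin.snoc_castSucc, Fin.snoc_last]
  ring

theorem multiEuler_of_isHomogeneous {g : MvPolynomial (Fin (d + 1)) ℝ} {k : ℕ}
    (hg : g.IsHomogeneous k) (n : ℕ) : multiEuler d n g = (k.descFactorial n : ℝ) • g := by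
  induction n generalizing g k with
  | zero => simp [multiEuler, pdList]
  | succ n ih =>
    rw [multiEuler_succ]
    simp_rw [ih hg.pderiv, mul_smul_comm]
    rw [← smul_sum, hg.sum_X_mul_pderiv, ← Nat.cast_smul_eq_nsmul ℝ, smul_smul]
    cases k with
    | zero => simp
    | succ k =>
      rw [Nat.succ_descFactorial_succ, Nat.add_sub_cancel]
      push_cast
      ring_nf

theorem multiEuler_eq_zero_of_totalDegree_lt {n : ℕ} {g : MvPolynomial (Fin (d + 1)) ℝ}
    (hg : g.totalDegree < n) : multiEuler d n g = 0 := by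
  rw [← sum_homogeneousComponent g, multiEuler_eq_coe, map_sum, ← multiEuler_eq_coe]
  refine sum_eq_zero fun k hk => ?_
  rw [multiEuler_of_isHomogeneous (homogeneousComponent_isHomogeneous k g),
    Nat.descFactorial_of_lt (by rw [mem_range] at hk; omega), Nat.cast_zero, zero_smul]

theorem kstar_eq_sum_range (θ : ℝ) (f : MvPolynomial (Fin (d + 1)) ℝ)
    {g : MvPolynomial (Fin (d + 1)) ℝ} {N : ℕ} (hN : g.totalDegree < N) :
    kstar d θ f g = ∑ n ∈ range N, (θ ^ n / (n.factorial : ℝ)) •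
      (((pderiv 0).toLinearMap ^ n) f * multiEuler d n g) := by
  simp only [Module.End.pow_apply, Derivation.coeFn_coe]
  refine finsum_eq_sum_of_support_subset _ fun n hn => ?_
  by_contra hnN
  rw [coe_range, Set.mem_Iio, not_lt] at hnN
  exact hn (by dsimp only; rw [multiEuler_eq_zero_of_totalDegree_lt (hN.trans_le hnN), mul_zero,
    smul_zero])

theorem kstar_add_left (θ : ℝ) (f₁ f₂ g : MvPolynomial (Fin (d + 1)) ℝ) :
    kstar d θ (f₁ + f₂) g = kstar d θ f₁ g + kstar d θ f₂ g := by
  have hN := g.totalDegree.lt_succ_self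
  simp only [kstar_eq_sum_range θ _ hN, ← sum_add_distrib, ← smul_add, ← add_mul, map_add]

theorem kstar_add_right (θ : ℝ) (f g₁ g₂ : MvPolynomial (Fin (d + 1)) ℝ) :
    kstar d θ f (g₁ + g₂) = kstar d θ f g₁ + kstar d θ f g₂ := by
  set N := max g₁.totalDegree g₂.totalDegree + 1
  have h₁ : g₁.totalDegree < N := by omega
  have h₂ : g₂.totalDegree < N := by omega
  have h : (g₁ + g₂).totalDegree < N := (totalDegree_add g₁ g₂).trans_lt (by omega)
  simp only [kstar_eq_sum_range θ f h, kstar_eq_sum_range θ f h₁, kstar_eq_sum_range θ f h₂,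
    ← sum_add_distrib, ← smul_add, ← mul_add, multiEuler_eq_coe, map_add]

noncomputable def kstarAddMonoidHom (θ : ℝ) (f : MvPolynomial (Fin (d + 1)) ℝ) :
    MvPolynomial (Fin (d + 1)) ℝ →+ MvPolynomial (Fin (d + 1)) ℝ :=
  AddMonoidHom.mk' (kstar d θ f) (kstar_add_right θ f)

noncomputable def kstarShift (d : ℕ) (θ : ℝ) : Module.End ℝ (MvPolynomial (Fin (d + 1)) ℝ) :=
  1 + θ • (pderiv 0).toLinearMap

theorem kstarShift_apply_mul (θ : ℝ) (a b : MvPolynomial (Fin (d + 1)) ℝ) :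
    kstarShift d θ (a * b) = kstarShift d θ a * b + a * (θ • (pderiv 0).toLinearMap) b := by
  simp [kstarShift, Derivation.leibniz, add_mul, mul_comm b]
  abel

theorem kstarShift_pow (θ : ℝ) (k : ℕ) : kstarShift d θ ^ k =
    ∑ n ∈ range (k + 1), k.choose n • (θ • (pderiv 0).toLinearMap) ^ n := by
  rw [kstarShift, add_comm 1, (Commute.one_right _).add_pow]
  simp [nsmul_eq_mul, Nat.cast_comm]

theorem kstar_of_isHomogeneous (θ : ℝ) (f : MvPolynomial (Fin (d + 1)) ℝ)
    {g : MvPolynomial (Fin (d + 1)) ℝ} {k : ℕ} (hg : g.IsHomogeneous k) :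
    kstar d θ f g = (kstarShift d θ ^ k) f * g := by
  rw [kstar_eq_sum_range θ f (hg.totalDegree_le.trans_lt k.lt_succ_self), kstarShift_pow,
    LinearMap.coe_sum, Finset.sum_apply, sum_mul]
  refine sum_congr rfl fun n _ => ?_
  rw [multiEuler_of_isHomogeneous hg, Nat.descFactorial_eq_factorial_mul_choose, smul_pow,
    LinearMap.smul_apply, LinearMap.smul_apply, mul_smul_comm, smul_mul_assoc, smul_mul_assoc,
    smul_smul, ← Nat.cast_smul_eq_nsmul ℝ, smul_smul]
  congr 1
  push_cast
  field_simp

theorem kstar_assoc_of_isHomogeneous (θ : ℝ) (f : MvPolynomial (Fin (d + 1)) ℝ)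
    {g h : MvPolynomial (Fin (d + 1)) ℝ} {k l : ℕ} (hg : g.IsHomogeneous k)
    (hh : h.IsHomogeneous l) :
    kstar d θ (kstar d θ f g) h = kstar d θ f (kstar d θ g h) := by
  set U := θ • (pderiv (0 : Fin (d + 1))).toLinearMap (R := ℝ)
  have hU (n : ℕ) : (U ^ n) g = θ ^ n • (pderiv 0)^[n] g := by
    rw [smul_pow, LinearMap.smul_apply, Module.End.pow_apply, Derivation.coeFn_coe]
  have hUg_mul {n : ℕ} (hnl : n ≤ l) : ((U ^ n) g * h).IsHomogeneous (l - n + k) := by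
    by_cases hnk : n ≤ k
    · have hUg : ((U ^ n) g).IsHomogeneous (k - n) := by
        rw [hU]; exact (homogeneousSubmodule _ ℝ _).smul_mem _ (hg.iterate_pderiv 0 n)
      convert hUg.mul hh using 1
      omega
    · rw [hU, hg.iterate_pderiv_eq_zero 0 (by omega), smul_zero, zero_mul]
      exact isHomogeneous_zero _ _ _
  calc kstar d θ (kstar d θ f g) h = (kstarShift d θ ^ l) ((kstarShift d θ ^ k) f * g) * h := by
        rw [kstar_of_isHomogeneous θ f hg, kstar_of_isHomogeneous θ _ hh]
    _ = ∑ n ∈ range (l + 1), l.choose n • kstar d θ f ((U ^ n) g * h) := by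
        rw [Module.End.pow_apply_mul_of_apply_mul (kstarShift_apply_mul θ), sum_mul]
        refine sum_congr rfl fun n hn => ?_
        rw [smul_mul_assoc, kstar_of_isHomogeneous θ f (hUg_mul (Nat.lt_succ_iff.mp
          (mem_range.mp hn))), ← Module.End.mul_apply, ← pow_add, mul_assoc]
    _ = kstar d θ f (kstar d θ g h) := by
        rw [kstar_of_isHomogeneous θ g hh, kstarShift_pow, LinearMap.coe_sum, Finset.sum_apply,
          sum_mul]
        change _ = kstarAddMonoidHom θ f _
        simp only [map_sum, LinearMap.smul_apply, smul_mul_assoc, map_nsmul]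
        rfl

theorem kstar_assoc_general (d : ℕ) (θ : ℝ)
    (f g h : MvPolynomial (Fin (d + 1)) ℝ) :
    kstar d θ (kstar d θ f g) h = kstar d θ f (kstar d θ g h) := by
  induction g using MvPolynomial.induction_on' with
  | monomial u a =>
    induction h using MvPolynomial.induction_on' with
    | monomial v b =>
      exact kstar_assoc_of_isHomogeneous θ f (isHomogeneous_monomial a rfl)
        (isHomogeneous_monomial b rfl)
    | add p q hp hq => rw [kstar_add_right, kstar_add_right, hp, hq, ← kstar_add_right]
  | add p q hp hq =>
    rw [kstar_add_right, kstar_add_left, hp, hq, kstar_add_left, ← kstar_add_right]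

/-- the κ-Minkowski star product is associative. -/
theorem kstar_assoc (d : ℕ) (hd : 1 ≤ d) (θ : ℝ)
    (f g h : MvPolynomial (Fin (d + 1)) ℝ) :
    kstar d θ (kstar d θ f g) h = kstar d θ f (kstar d θ g h) :=
  kstar_assoc_general d θ f g h
end
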